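/- In the free product F = (ℤ/3ℤ) ∗ (ℤ/2ℤ), let a be the image of a generator of ℤ/3ℤ and b the image of the generator of ℤ/2ℤ. Then for every integer c with c ∉ {1, 2, 3}, the element (a⁻¹b)^c · (b a⁻¹) (where the exponent c is an integer power, possibly negative or zero) is not a proper power: there is no g ∈ F and no integer n ≥ 2 with gⁿ = (a⁻¹b)^c(ba⁻¹). -/

import Mathlib

/-!
Send `a ↦ S T⁻¹` and `b ↦ S` into `PSL(2, ℤ)`. Then `a⁻¹ b ↦ T`, and the element becomes the
class of `M = !![1 - c, c; -1, 1]`, whose lower-left entry is `-1` and whose trace `2 - c` has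
absolute value at least `2` exactly when `c ∉ {1, 2, 3}`.

By Cayley–Hamilton, a determinant-one `2 × 2` matrix `G` satisfies
`(G ^ (n + 1)) 1 0 = Sₙ(tr G) * G 1 0`, with `Sₙ` the rescaled Chebyshev polynomials, and
`|Sₙ(t)| ≥ n + 1` once `|t| ≥ 2`. So if `G ^ n = ±M` with `n ≥ 2`, the unit entry `M 1 0`
forces `|tr G| ≤ 1`, hence `G ^ 12 = 1` and `M ^ 12 = 1`; but `M ^ 12` has a nonzero
lower-left entry.
-/

abbrev Z3starZ2 : Type :=
  Monoid.Coprod (Multiplicative (ZMod 3)) (Multiplicative (ZMod 2))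

open scoped MatrixGroups

open Polynomial in
theorem Polynomial.Chebyshev.le_abs_eval_S {R : Type*} [CommRing R] [LinearOrder R]
    [IsStrictOrderedRing R] {x : R} (hx : 2 ≤ |x|) (n : ℕ) : (n : R) + 1 ≤ |(S R n).eval x| := by
  suffices h : ∀ n : ℕ, (n : R) + 1 ≤ |(S R n).eval x| ∧
      |(S R n).eval x| + 1 ≤ |(S R (n + 1)).eval x| from (h n).1
  intro n
  induction n with
  | zero =>
    simp only [Nat.cast_zero, zero_add, S_zero, S_one, eval_one, eval_X, abs_one, le_refl, true_and]
    linarith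
  | succ n ih =>
    refine ⟨by push_cast; linarith [ih.1, ih.2], ?_⟩
    have h := S_add_one R ((n : ℤ) + 1)
    push_cast
    rw [h, add_sub_cancel_right, eval_sub, eval_mul, eval_X]
    have := abs_sub_abs_le_abs_sub (x * (S R (n + 1)).eval x) ((S R n).eval x)
    rw [abs_mul] at this
    nlinarith [abs_nonneg ((S R (n + 1)).eval x)]

namespace Matrix

section CommRing

variable {R : Type*} [CommRing R]

theorem sq_eq_trace_smul_sub_det_smul_one (M : Matrix (Fin 2) (Fin 2) R) :
    M ^ 2 = M.trace • M - M.det • 1 := by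
  ext i j
  fin_cases i <;> fin_cases j <;> simp [sq, mul_apply, trace_fin_two, det_fin_two] <;> ring

open Polynomial in
theorem pow_succ_eq_eval_S {M : Matrix (Fin 2) (Fin 2) R} (hM : M.det = 1) (n : ℕ) :
    M ^ (n + 1) =
      (Chebyshev.S R n).eval M.trace • M - (Chebyshev.S R (n - 1)).eval M.trace • 1 := by
  induction n with
  | zero => simp
  | succ n ih =>
    rw [pow_succ, ih, sub_mul, smul_mul_assoc, smul_mul_assoc, ← sq,
      sq_eq_trace_smul_sub_det_smul_one, hM, one_mul]
    push_cast
    rw [Chebyshev.S_add_one, add_sub_cancel_right]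
    simp only [eval_sub, eval_mul, eval_X]
    module

theorem pow_succ_apply_one_zero {M : Matrix (Fin 2) (Fin 2) R} (hM : M.det = 1) (n : ℕ) :
    (M ^ (n + 1)) 1 0 = (Polynomial.Chebyshev.S R n).eval M.trace * M 1 0 := by
  simp [pow_succ_eq_eval_S hM]

end CommRing

variable {M : Matrix (Fin 2) (Fin 2) ℤ}

theorem pow_twelve_eq_one_of_abs_trace_le_one (hM : M.det = 1) (htr : |M.trace| ≤ 1) :
    M ^ 12 = 1 := by
  have h2 : M ^ 2 = M.trace • M - 1 := by
    rw [sq_eq_trace_smul_sub_det_smul_one, hM, one_smul]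
  have h3 : M ^ 3 = (M.trace ^ 2 - 1) • M - M.trace • 1 := by
    rw [pow_succ, h2, sub_mul, smul_mul_assoc, ← sq, h2, one_mul]
    module
  obtain h | h | h : M.trace = -1 ∨ M.trace = 0 ∨ M.trace = 1 := by
    rw [abs_le] at htr
    omega
  · rw [h] at h3
    rw [show 12 = 3 * 4 from rfl, pow_mul, h3]
    norm_num
  · rw [h] at h2
    rw [show 12 = 2 * 6 from rfl, pow_mul, h2]
    norm_num [Even.neg_one_pow]
  · rw [h] at h3
    rw [show 12 = 3 * 4 from rfl, pow_mul, h3]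
    norm_num [Even.neg_one_pow]

theorem abs_trace_le_one_of_abs_pow_apply_one_zero (hM : M.det = 1) {n : ℕ} (hn : 2 ≤ n)
    (h10 : |(M ^ n) 1 0| = 1) : |M.trace| ≤ 1 := by
  obtain ⟨m, rfl⟩ : ∃ m, n = m + 1 := ⟨n - 1, by omega⟩
  by_contra! htr
  rw [pow_succ_apply_one_zero hM, abs_mul] at h10
  have hS := Polynomial.Chebyshev.le_abs_eval_S (Int.add_one_le_of_lt htr) m
  have := Int.eq_one_of_mul_eq_one_right (abs_nonneg _) h10
  omega

theorem pow_succ_apply_one_zero_ne_zero (hM : M.det = 1) (htr : 2 ≤ |M.trace|) (h10 : M 1 0 ≠ 0)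
    (n : ℕ) : (M ^ (n + 1)) 1 0 ≠ 0 := by
  have hS := Polynomial.Chebyshev.le_abs_eval_S htr n
  rw [pow_succ_apply_one_zero hM]
  refine mul_ne_zero (fun h ↦ ?_) h10
  rw [h, abs_zero] at hS
  omega

end Matrix

open Matrix Matrix.SpecialLinearGroup in
theorem Matrix.ProjectiveSpecialLinearGroup.pow_ne_of_two_le_abs_trace {A : SL(2, ℤ)}
    (hA : |A 1 0| = 1) (htr : 2 ≤ |(A : Matrix (Fin 2) (Fin 2) ℤ).trace|)
    (g : PSL(2, ℤ)) {n : ℕ} (hn : 2 ≤ n) : g ^ n ≠ A := by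
  obtain ⟨G, rfl⟩ := QuotientGroup.mk_surjective g
  intro h
  rw [← QuotientGroup.mk_pow, QuotientGroup.eq, mem_center_iff] at h
  obtain ⟨r, hr, hZ⟩ := h
  replace hr : r ^ 2 = 1 := by simpa using hr
  have hAG : (A : Matrix (Fin 2) (Fin 2) ℤ) = r • (G : Matrix (Fin 2) (Fin 2) ℤ) ^ n := by
    rw [← mul_inv_cancel_left (G ^ n) A, coe_mul, ← hZ, coe_pow]
    simpa using (Int.cast_commute r _).symm.eq
  have hG : |(G : Matrix (Fin 2) (Fin 2) ℤ).trace| ≤ 1 := by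
    refine abs_trace_le_one_of_abs_pow_apply_one_zero G.det_coe hn ?_
    have hr1 : |r| = 1 :=
      (pow_eq_one_iff_of_nonneg (abs_nonneg r) two_ne_zero).mp (by rwa [sq_abs])
    rwa [hAG, smul_apply, smul_eq_mul, abs_mul, hr1, one_mul] at hA
  have h12 : (A : Matrix (Fin 2) (Fin 2) ℤ) ^ (11 + 1) = 1 := by
    rw [hAG, smul_pow, ← pow_mul, mul_comm, pow_mul,
      pow_twelve_eq_one_of_abs_trace_le_one G.det_coe hG, one_pow, show 11 + 1 = 2 * 6 from rfl,
      pow_mul, hr, one_pow, one_smul]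
  apply pow_succ_apply_one_zero_ne_zero A.det_coe htr (fun h ↦ by simp [h] at hA) 11
  rw [h12, one_apply_ne (by decide)]

theorem Monoid.Coprod.exists_hom_inl_inr_eq {G H K : Type*} [Group G] [Group H] [Group K]
    {g : G} {h : H} (hg : ∀ x, x ∈ Subgroup.zpowers g) (hh : ∀ y, y ∈ Subgroup.zpowers h)
    {x y : K} (hx : orderOf x ∣ orderOf g) (hy : orderOf y ∣ orderOf h) :
    ∃ φ : Monoid.Coprod G H →* K, φ (inl g) = x ∧ φ (inr h) = y :=
  ⟨lift (monoidHomOfForallMemZpowers hg hx) (monoidHomOfForallMemZpowers hh hy), by simp⟩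

namespace ModularGroup

open Matrix.SpecialLinearGroup

theorem coe_S_mul_T_inv_pow_three : ((S * T⁻¹ : SL(2, ℤ)) : PSL(2, ℤ)) ^ 3 = 1 := by
  rw [← QuotientGroup.mk_pow, QuotientGroup.eq_one_iff]
  convert (Subgroup.center _).one_mem
  ext i j
  fin_cases i <;> fin_cases j <;> simp [pow_succ, coe_S]

theorem coe_S_sq : ((S : SL(2, ℤ)) : PSL(2, ℤ)) ^ 2 = 1 := by
  rw [← QuotientGroup.mk_pow, QuotientGroup.eq_one_iff, mem_center_iff]
  exact ⟨-1, by norm_num, by ext i j; fin_cases i <;> fin_cases j <;> simp [sq, coe_S]⟩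

theorem coe_T_zpow_mul_S_mul_T_mul_S_inv (c : ℤ) :
    ((T ^ c * (S * T * S⁻¹) : SL(2, ℤ)) : Matrix (Fin 2) (Fin 2) ℤ) = !![1 - c, c; -1, 1] := by
  ext i j
  fin_cases i <;> fin_cases j <;>
    simp [coe_T_zpow, coe_S, coe_T, coe_inv, Matrix.adjugate_fin_two, sub_eq_add_neg]

end ModularGroup

open ModularGroup in
theorem Z3starZ2.exists_hom_to_PSL (a₀ : Multiplicative (ZMod 3))
    (ha₀ : Subgroup.zpowers a₀ = ⊤) :
    ∃ ψ : Z3starZ2 →* PSL(2, ℤ), ψ (Monoid.Coprod.inl a₀) = (S * T⁻¹ : SL(2, ℤ)) ∧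
      ψ (Monoid.Coprod.inr (Multiplicative.ofAdd 1)) = (S : SL(2, ℤ)) := by
  have ha : ∀ x, x ∈ Subgroup.zpowers a₀ := fun x ↦ ha₀ ▸ Subgroup.mem_top x
  have hb : ∀ y : Multiplicative (ZMod 2), y ∈ Subgroup.zpowers (Multiplicative.ofAdd 1) := by
    intro y
    obtain rfl | rfl : y = 1 ∨ y = Multiplicative.ofAdd 1 := by revert y; decide
    exacts [Subgroup.one_mem _, Subgroup.mem_zpowers _]
  refine Monoid.Coprod.exists_hom_inl_inr_eq ha hb ?_ ?_
  · rw [orderOf_eq_card_of_forall_mem_zpowers ha]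
    simpa using orderOf_dvd_of_pow_eq_one coe_S_mul_T_inv_pow_three
  · rw [orderOf_eq_card_of_forall_mem_zpowers hb]
    simpa using orderOf_dvd_of_pow_eq_one coe_S_sq

/-- In `F = (ℤ/3ℤ) ∗ (ℤ/2ℤ)`, with `a` the image of a generator of `ℤ/3ℤ` and `b` the
image of the generator of `ℤ/2ℤ`, for every integer `c ∉ {1, 2, 3}` the element
`(a⁻¹b)^c (ba⁻¹)` is not a proper power: there is no `g ∈ F` and no integer `n ≥ 2`
with `gⁿ = (a⁻¹b)^c(ba⁻¹)`. -/
theorem sigma1_pow_c_sigma2_not_proper_power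
    (a₀ : Multiplicative (ZMod 3)) (ha₀ : Subgroup.zpowers a₀ = ⊤)
    (c : ℤ) (hc : c ∉ ({1, 2, 3} : Set ℤ)) :
    ¬ ∃ (g : Z3starZ2) (n : ℤ), 2 ≤ n ∧
      g ^ n = ((Monoid.Coprod.inl a₀)⁻¹ *
          Monoid.Coprod.inr (Multiplicative.ofAdd (1 : ZMod 2))) ^ c *
        (Monoid.Coprod.inr (Multiplicative.ofAdd (1 : ZMod 2)) *
          (Monoid.Coprod.inl a₀)⁻¹) := by
  open ModularGroup in
  rintro ⟨g, n, hn, hgn⟩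
  obtain ⟨ψ, hψa, hψb⟩ := Z3starZ2.exists_hom_to_PSL a₀ ha₀
  lift n to ℕ using (by omega)
  have hψg : ψ g ^ n = ((T ^ c * (S * T * S⁻¹) : SL(2, ℤ)) : PSL(2, ℤ)) := by
    rw [← map_pow, ← zpow_natCast, hgn]
    simp only [map_mul, map_inv, map_zpow, hψa, hψb, ← QuotientGroup.mk_inv,
      ← QuotientGroup.mk_mul, ← QuotientGroup.mk_zpow]
    congr 1
    group
  refine Matrix.ProjectiveSpecialLinearGroup.pow_ne_of_two_le_abs_trace ?_ ?_ (ψ g) (by omega)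
    hψg <;> rw [coe_T_zpow_mul_S_mul_T_mul_S_inv]
  · simp
  · simp only [Set.mem_insert_iff, Set.mem_singleton_iff, not_or] at hc
    rw [Matrix.trace_fin_two_of, le_abs]
    omega
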